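/- arXiv:1703.06825 — 4 statements merged into one kernel-verified Lean document; each statement's English description precedes it below -/
import Mathlib

section
/- Let b > 0, c > 0, α ∈ ℝ and set β = 1 − α. Let ε : [b,∞) → ℝ be a continuously differentiable function with ε(t) → 0 as t → ∞, let L(t) = c·exp(∫_b^t ε(s)/s ds) and a(t) = t^α·L(t), and define μ(t) = −t²·a''(t)/a(t) for t > b. Then the limit lim_{x→∞} x·∫_x^∞ μ(t)/t² dt exists and equals α(1−α), and moreover α(1−α) ≤ 1/4. -/
/-!
With the logarithmic derivative `h = a'/a = (α + ε t)/t`, the Riccati substitution turns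
the acceleration equation into `μ/t² = -(h² + h')`. Integrating,
`∫_x^∞ μ/t² = h x - ∫_x^∞ h²`. Now `x h x = α + ε x → α`, and `x ∫_x^∞ g/t² → lim g`
for any `g` with a limit at infinity; applied to `g = (α + ε)²` this gives
`x ∫_x^∞ h² → α²`, so `Γ = α - α² = α(1 - α) ≤ 1/4`.
-/

open Real Filter Set intervalIntegral

open MeasureTheory Topology

section InverseSquareWeight

variable {g : ℝ → ℝ} {x x₀ C l : ℝ}

lemma rpow_neg_two_eq_inv_sq {t : ℝ} (ht : 0 ≤ t) : t ^ (-2 : ℝ) = (t ^ 2)⁻¹ := by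
  rw [rpow_neg ht, rpow_two]

lemma integrableOn_Ioi_inv_sq (hx : 0 < x) : IntegrableOn (fun t : ℝ => (t ^ 2)⁻¹) (Ioi x) :=
  (integrableOn_Ioi_rpow_of_lt (by norm_num) hx).congr_fun
    (fun t ht => rpow_neg_two_eq_inv_sq (hx.trans ht).le) measurableSet_Ioi

lemma integral_Ioi_inv_sq (hx : 0 < x) : ∫ t in Ioi x, (t ^ 2)⁻¹ = x⁻¹ := by
  rw [← setIntegral_congr_fun measurableSet_Ioi
    (fun t ht => rpow_neg_two_eq_inv_sq (hx.trans ht).le), integral_Ioi_rpow_of_lt (by norm_num) hx]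
  norm_num [rpow_neg_one]

lemma abs_mul_integral_Ioi_div_sq_le (hx : 0 < x) (hC : ∀ t ∈ Ioi x, |g t| ≤ C) :
    |x * ∫ t in Ioi x, g t / t ^ 2| ≤ C := by
  have hbound := MeasureTheory.norm_integral_le_of_norm_le (f := fun t => g t / t ^ 2)
    ((integrableOn_Ioi_inv_sq hx).const_mul C)
    (ae_restrict_of_forall_mem measurableSet_Ioi fun t ht => by
      rw [norm_eq_abs, abs_div, abs_of_pos (pow_pos (hx.trans ht) 2), div_eq_mul_inv]
      exact mul_le_mul_of_nonneg_right (hC t ht) (by positivity))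
  rw [MeasureTheory.integral_const_mul, integral_Ioi_inv_sq hx, norm_eq_abs] at hbound
  calc |x * ∫ t in Ioi x, g t / t ^ 2| ≤ x * (C * x⁻¹) := by
        rw [abs_mul, abs_of_pos hx]; gcongr
    _ = C := by field_simp

lemma exists_abs_le_of_continuousOn_Ici (hgc : ContinuousOn g (Ici x))
    (hg : Tendsto g atTop (𝓝 l)) : ∃ C, ∀ t ∈ Ici x, |g t| ≤ C := by
  obtain ⟨s, hs, hbdd⟩ := Metric.exists_isBounded_image_of_tendsto hg
  obtain ⟨T, hT⟩ := mem_atTop_sets.1 hs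
  have hcover : Ici x ⊆ Icc x T ∪ s := fun t ht =>
    (le_total t T).imp (fun htT => ⟨ht, htT⟩) (hT t)
  have hbdd' : Bornology.IsBounded (g '' Ici x) :=
    (((isCompact_Icc.image_of_continuousOn (hgc.mono Icc_subset_Ici_self)).isBounded).union
      hbdd).subset (by rw [← image_union]; exact image_mono hcover)
  obtain ⟨C, hC⟩ := isBounded_iff_forall_norm_le.1 hbdd'
  exact ⟨C, fun t ht => hC _ (mem_image_of_mem g ht)⟩

lemma integrableOn_Ioi_div_sq (hx : 0 < x) (hgc : ContinuousOn g (Ici x))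
    (hg : Tendsto g atTop (𝓝 l)) : IntegrableOn (fun t => g t / t ^ 2) (Ioi x) := by
  obtain ⟨C, hC⟩ := exists_abs_le_of_continuousOn_Ici hgc hg
  refine ((integrableOn_Ioi_inv_sq hx).const_mul C).mono' ?_
    (ae_restrict_of_forall_mem measurableSet_Ioi fun t ht => ?_)
  · exact ((hgc.mono Ioi_subset_Ici_self).div (continuous_pow 2).continuousOn
      fun t ht => (pow_pos (hx.trans ht) 2).ne').aestronglyMeasurable measurableSet_Ioi
  · rw [norm_eq_abs, abs_div, abs_of_pos (pow_pos (hx.trans ht) 2), div_eq_mul_inv]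
    exact mul_le_mul_of_nonneg_right (hC t (mem_Ici_of_Ioi ht)) (by positivity)

lemma tendsto_mul_integral_Ioi_div_sq (hx₀ : 0 < x₀) (hgc : ContinuousOn g (Ici x₀))
    (hg : Tendsto g atTop (𝓝 l)) :
    Tendsto (fun x => x * ∫ t in Ioi x, g t / t ^ 2) atTop (𝓝 l) := by
  have hsmall : Tendsto (fun x => x * ∫ t in Ioi x, (g t - l) / t ^ 2) atTop (𝓝 0) := by
    rw [Metric.tendsto_atTop]
    intro δ hδ
    obtain ⟨X, hX⟩ :=
      eventually_atTop.1 (hg.eventually (Metric.closedBall_mem_nhds l (half_pos hδ)))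
    refine ⟨max X x₀, fun x hx => ?_⟩
    rw [dist_zero_right, norm_eq_abs]
    refine (abs_mul_integral_Ioi_div_sq_le (hx₀.trans_le (le_of_max_le_right hx))
      fun t ht => ?_).trans_lt (half_lt_self hδ)
    exact hX t ((le_of_max_le_left hx).trans ht.le)
  have hshift : ∀ᶠ x in atTop, (x * ∫ t in Ioi x, (g t - l) / t ^ 2) + l
      = x * ∫ t in Ioi x, g t / t ^ 2 := by
    filter_upwards [eventually_ge_atTop x₀] with x hx
    have hx0 : 0 < x := hx₀.trans_le hx
    simp_rw [sub_div, div_eq_mul_inv l]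
    rw [integral_sub (integrableOn_Ioi_div_sq hx0 (hgc.mono (Ici_subset_Ici.2 hx)) hg)
      ((integrableOn_Ioi_inv_sq hx0).const_mul l), MeasureTheory.integral_const_mul,
      integral_Ioi_inv_sq hx0]
    field_simp
    ring
  simpa using (hsmall.add_const l).congr' hshift

end InverseSquareWeight

section Riccati

variable {a h h' f : ℝ → ℝ} {s : Set ℝ} {b x y t : ℝ}

lemma deriv_deriv_of_hasDerivAt_mul (hs : IsOpen s) (ha : ∀ u ∈ s, HasDerivAt a (a u * h u) u)
    (hh : HasDerivAt h (h' t) t) (ht : t ∈ s) : deriv (deriv a) t = a t * (h t ^ 2 + h' t) := by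
  have hda : deriv a =ᶠ[𝓝 t] a * h :=
    eventually_of_mem (hs.mem_nhds ht) fun u hu => (ha u hu).deriv
  rw [hda.deriv_eq, ((ha t ht).mul hh).deriv]
  ring

lemma integral_eq_sub_sub_integral_sq (hxy : x ≤ y)
    (hh : ∀ t ∈ Icc x y, HasDerivAt h (h' t) t) (hh'c : ContinuousOn h' (Icc x y))
    (hf : ∀ t ∈ Icc x y, f t = -(h t ^ 2 + h' t)) :
    ∫ t in x..y, f t = h x - h y - ∫ t in x..y, h t ^ 2 := by
  have hhc : ContinuousOn h (Icc x y) := fun t ht => (hh t ht).continuousAt.continuousWithinAt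
  have hsq : IntervalIntegrable (fun t => h t ^ 2) volume x y :=
    (hhc.pow 2).intervalIntegrable_of_Icc hxy
  have hd : IntervalIntegrable h' volume x y := hh'c.intervalIntegrable_of_Icc hxy
  rw [← uIcc_of_le hxy] at hh hf
  rw [intervalIntegral.integral_congr hf, intervalIntegral.integral_neg,
    intervalIntegral.integral_add hsq hd, integral_eq_sub_of_hasDerivAt hh hd]
  ring

lemma tendsto_integral_of_eq_neg_sq_add_deriv (hx : b < x)
    (hh : ∀ t ∈ Ioi b, HasDerivAt h (h' t) t) (hh'c : ContinuousOn h' (Ioi b))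
    (hf : ∀ t ∈ Ioi b, f t = -(h t ^ 2 + h' t)) (h0 : Tendsto h atTop (𝓝 0))
    (hsq : IntegrableOn (fun t => h t ^ 2) (Ioi x)) :
    Tendsto (fun y => ∫ t in x..y, f t) atTop (𝓝 (h x - ∫ t in Ioi x, h t ^ 2)) := by
  have hlim : Tendsto (fun y => h x - h y - ∫ t in x..y, h t ^ 2) atTop
      (𝓝 (h x - 0 - ∫ t in Ioi x, h t ^ 2)) :=
    (tendsto_const_nhds.sub h0).sub (intervalIntegral_tendsto_integral_Ioi x hsq tendsto_id)
  rw [sub_zero] at hlim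
  refine hlim.congr' ?_
  filter_upwards [eventually_ge_atTop x] with y hy
  have hsub : Icc x y ⊆ Ioi b := fun t ht => hx.trans_le ht.1
  exact (integral_eq_sub_sub_integral_sq hy (fun t ht => hh t (hsub ht)) (hh'c.mono hsub)
    fun t ht => hf t (hsub ht)).symm

end Riccati

section NormalizedRegularVariation

variable {b c α t : ℝ} {ε : ℝ → ℝ}

lemma hasDerivAt_integral_div_self (hb : 0 < b) (hεc : ContinuousOn ε (Ici b)) (ht : b < t) :
    HasDerivAt (fun u => ∫ s in b..u, ε s / s) (ε t / t) t := by
  have hc : ContinuousOn (fun s => ε s / s) (Ici b) :=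
    hεc.div continuousOn_id fun s hs => (hb.trans_le hs).ne'
  refine integral_hasDerivAt_right ((hc.mono ?_).intervalIntegrable)
    ((hc.mono Ioi_subset_Ici_self).stronglyMeasurableAtFilter isOpen_Ioi t ht)
    (hc.continuousAt (Ici_mem_nhds ht))
  rw [uIcc_of_le ht.le]
  exact Icc_subset_Ici_self

lemma hasDerivAt_rpow_mul_exp_integral (hb : 0 < b) (hεc : ContinuousOn ε (Ici b)) (ht : b < t) :
    HasDerivAt (fun u => u ^ α * (c * exp (∫ s in b..u, ε s / s)))
      (t ^ α * (c * exp (∫ s in b..t, ε s / s)) * ((α + ε t) / t)) t := by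
  have ht0 : 0 < t := hb.trans ht
  refine ((hasDerivAt_rpow_const (Or.inl ht0.ne')).mul
    (((hasDerivAt_integral_div_self hb hεc ht).exp).const_mul c)).congr_deriv ?_
  rw [rpow_sub ht0, rpow_one]
  field_simp

lemma hasDerivAt_add_div_self (hε : DifferentiableAt ℝ ε t) (ht : t ≠ 0) :
    HasDerivAt (fun u => (α + ε u) / u) ((deriv ε t * t - (α + ε t)) / t ^ 2) t :=
  (((hasDerivAt_const t α).add hε.hasDerivAt).div (hasDerivAt_id t) ht).congr_deriv
    (by simp)

lemma continuousOn_deriv_add_div_self (hb : 0 < b) (hε : ContDiffOn ℝ 1 ε (Ici b)) :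
    ContinuousOn (fun t => (deriv ε t * t - (α + ε t)) / t ^ 2) (Ioi b) := by
  have := (hε.mono Ioi_subset_Ici_self).continuousOn_deriv_of_isOpen isOpen_Ioi le_rfl
  have := hε.continuousOn.mono Ioi_subset_Ici_self
  fun_prop (disch := exact fun t ht => pow_ne_zero 2 (hb.trans ht).ne')

lemma tendsto_add_div_self (hε0 : Tendsto ε atTop (𝓝 0)) :
    Tendsto (fun t => (α + ε t) / t) atTop (𝓝 0) := by
  simpa [div_eq_mul_inv] using (tendsto_const_nhds.add hε0).mul tendsto_inv_atTop_zero

lemma tendsto_mul_add_div_self (hε0 : Tendsto ε atTop (𝓝 0)) :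
    Tendsto (fun x => x * ((α + ε x) / x)) atTop (𝓝 α) := by
  have hlim : Tendsto (fun x => α + ε x) atTop (𝓝 α) := by
    simpa using tendsto_const_nhds.add hε0
  refine hlim.congr' ?_
  filter_upwards [eventually_ne_atTop 0] with x hx
  field_simp

end NormalizedRegularVariation

/-- Proposition 2: for a normalized regularly varying solution `a(t) = t^α L(t)` of the
acceleration equation with `μ(t) = -t² a''(t)/a(t)`, the Marić limit
`Γ = lim_{x→∞} x ∫_x^∞ μ(t)/t² dt` exists, equals `α(1-α)`, and is `≤ 1/4`. -/
theorem stmt_0 (b c α : ℝ) (hb : 0 < b) (hc : 0 < c)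
    (ε : ℝ → ℝ) (hε : ContDiffOn ℝ 1 ε (Set.Ici b))
    (hε0 : Tendsto ε atTop (nhds 0))
    (L a μ : ℝ → ℝ)
    (hL : ∀ t, L t = c * Real.exp (∫ s in (b)..t, ε s / s))
    (ha : ∀ t, a t = t ^ α * L t)
    (hμ : ∀ t, b < t → μ t = -(t ^ 2 * deriv (deriv a) t / a t)) :
    ∃ I : ℝ → ℝ,
      (∀ x, b < x →
        Tendsto (fun y => ∫ t in (x)..y, μ t / t ^ 2) atTop (nhds (I x))) ∧
      Tendsto (fun x => x * I x) atTop (nhds (α * (1 - α))) ∧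
      α * (1 - α) ≤ 1 / 4 := by
  have hεc : ContinuousOn ε (Ici b) := hε.continuousOn
  have ha_eq : a = fun u => u ^ α * (c * exp (∫ s in b..u, ε s / s)) :=
    funext fun u => by rw [ha, hL]
  set h : ℝ → ℝ := fun t => (α + ε t) / t
  set h' : ℝ → ℝ := fun t => (deriv ε t * t - (α + ε t)) / t ^ 2
  have hh' : ∀ t ∈ Ioi b, HasDerivAt h (h' t) t := fun t ht =>
    hasDerivAt_add_div_self ((hε.differentiableOn one_ne_zero).differentiableAt (Ici_mem_nhds ht))
      (hb.trans ht).ne'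
  have hμ' : ∀ t ∈ Ioi b, μ t / t ^ 2 = -(h t ^ 2 + h' t) := fun t ht => by
    have ht0 : 0 < t := hb.trans ht
    have hat : a t ≠ 0 := by rw [ha, hL]; positivity
    have ha' : ∀ u ∈ Ioi b, HasDerivAt a (a u * h u) u := fun u hu =>
      ha_eq ▸ hasDerivAt_rpow_mul_exp_integral hb hεc hu
    rw [hμ t ht, deriv_deriv_of_hasDerivAt_mul isOpen_Ioi ha' (hh' t ht) ht]
    field_simp
  have hsq : (fun t => h t ^ 2) = fun t => (α + ε t) ^ 2 / t ^ 2 := funext fun t => div_pow _ _ 2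
  have hg : Tendsto (fun t => (α + ε t) ^ 2) atTop (𝓝 (α ^ 2)) := by
    simpa using (tendsto_const_nhds.add hε0).pow 2
  have hgc : ContinuousOn (fun t => (α + ε t) ^ 2) (Ici b) := (continuousOn_const.add hεc).pow 2
  refine ⟨fun x => h x - ∫ t in Ioi x, h t ^ 2, fun x hx => ?_, ?_,
    by nlinarith [sq_nonneg (α - 1 / 2)]⟩
  · refine tendsto_integral_of_eq_neg_sq_add_deriv hx hh' (continuousOn_deriv_add_div_self hb hε)
      hμ' (tendsto_add_div_self hε0) ?_
    rw [hsq]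
    exact integrableOn_Ioi_div_sq (hb.trans hx) (hgc.mono (Ici_subset_Ici.2 hx.le)) hg
  · simp only [hsq, mul_sub]
    convert (tendsto_mul_add_div_self hε0).sub
      (tendsto_mul_integral_Ioi_div_sq hb hgc hg) using 2
    ring
end

section
/- Let t₀ > 0 and let f : [t₀,∞) → ℝ be a continuous function with m ≤ f(t) ≤ M for all t ≥ t₀, for some real constants m ≤ M. Define a(t) = exp(∫_{t₀}^t f(s)/s ds) for t ≥ t₀. Then for every λ ≥ 1: λ^m ≤ liminf_{x→∞} a(λx)/a(x) ≤ limsup_{x→∞} a(λx)/a(x) ≤ λ^M. -/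
open Real Filter Set intervalIntegral

/-- Proposition 3 of the paper (quantitative form): the scale factor
`a(t) = exp(∫_{t₀}^t f(s)/s ds)` with `m ≤ f ≤ M` bounded belongs to the class ER:
for every `λ ≥ 1`, `λ^m ≤ liminf_{x→∞} a(λx)/a(x) ≤ limsup_{x→∞} a(λx)/a(x) ≤ λ^M`. -/
theorem stmt_7 (t₀ m M : ℝ) (ht₀ : 0 < t₀) (hmM : m ≤ M)
    (f : ℝ → ℝ) (hf : ContinuousOn f (Set.Ici t₀))
    (hbound : ∀ t, t₀ ≤ t → m ≤ f t ∧ f t ≤ M)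
    (a : ℝ → ℝ)
    (ha : ∀ t, t₀ ≤ t → a t = Real.exp (∫ s in (t₀)..t, f s / s)) :
    ∀ l : ℝ, 1 ≤ l →
      l ^ m ≤ liminf (fun x => a (l * x) / a x) atTop ∧
      liminf (fun x => a (l * x) / a x) atTop
        ≤ limsup (fun x => a (l * x) / a x) atTop ∧
      limsup (fun x => a (l * x) / a x) atTop ≤ l ^ M := by
  intro l hl
  have hl0 : (0:ℝ) < l := lt_of_lt_of_le one_pos hl
  have hcont : ContinuousOn (fun s => f s / s) (Set.Ici t₀) := by
    apply hf.div continuousOn_id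
    intro s hs
    exact ne_of_gt (lt_of_lt_of_le ht₀ hs)
  have hsub : ∀ {u v : ℝ}, t₀ ≤ u → u ≤ v → Set.uIcc u v ⊆ Set.Ici t₀ := by
    intro u v hu huv
    rw [Set.uIcc_of_le huv]
    exact fun s hs => hu.trans hs.1
  have key : ∀ x, t₀ ≤ x → l ^ m ≤ a (l*x) / a x ∧ a (l*x) / a x ≤ l ^ M := by
    intro x hx
    have hx0 : 0 < x := lt_of_lt_of_le ht₀ hx
    have hxl : x ≤ l * x := le_mul_of_one_le_left hx0.le hl
    have hlx : t₀ ≤ l * x := hx.trans hxl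
    have hint1 : IntervalIntegrable (fun s => f s / s) MeasureTheory.volume t₀ x :=
      (hcont.mono (hsub le_rfl hx)).intervalIntegrable
    have hint2 : IntervalIntegrable (fun s => f s / s) MeasureTheory.volume x (l*x) :=
      (hcont.mono (hsub hx hxl)).intervalIntegrable
    have hsplit : (∫ s in (t₀)..(l*x), f s / s)
        = (∫ s in (t₀)..x, f s / s) + ∫ s in x..(l*x), f s / s :=
      (intervalIntegral.integral_add_adjacent_intervals hint1 hint2).symm
    have hratio : a (l*x) / a x = Real.exp (∫ s in x..(l*x), f s / s) := by
      rw [ha x hx, ha _ hlx, ← Real.exp_sub, hsplit]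
      congr 1
      ring
    -- constant integrals
    have hconst : ∀ c : ℝ, (∫ s in x..(l*x), c / s) = c * Real.log l := by
      intro c
      have h0 : (0:ℝ) ∉ Set.uIcc x (l*x) := by
        rw [Set.uIcc_of_le hxl]
        intro h
        exact absurd h.1 (not_le.mpr hx0)
      have : (∫ s in x..(l*x), c / s) = c * ∫ s in x..(l*x), s⁻¹ := by
        simp_rw [div_eq_mul_inv]
        exact intervalIntegral.integral_const_mul c _
      rw [this, integral_inv h0, mul_div_assoc, div_self hx0.ne', mul_one]
    have hintm : IntervalIntegrable (fun s => m / s) MeasureTheory.volume x (l*x) :=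
      ((continuousOn_const.div continuousOn_id (fun s hs => ne_of_gt (lt_of_lt_of_le ht₀ hs))).mono (hsub hx hxl)).intervalIntegrable
    have hintM : IntervalIntegrable (fun s => M / s) MeasureTheory.volume x (l*x) :=
      ((continuousOn_const.div continuousOn_id (fun s hs => ne_of_gt (lt_of_lt_of_le ht₀ hs))).mono (hsub hx hxl)).intervalIntegrable
    have hlow : m * Real.log l ≤ ∫ s in x..(l*x), f s / s := by
      rw [← hconst m]
      apply intervalIntegral.integral_mono_on hxl hintm hint2
      intro s hs
      have hs0 : 0 < s := lt_of_lt_of_le hx0 hs.1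
      exact div_le_div_of_nonneg_right (hbound s (hx.trans hs.1)).1 hs0.le
    have hhigh : (∫ s in x..(l*x), f s / s) ≤ M * Real.log l := by
      rw [← hconst M]
      apply intervalIntegral.integral_mono_on hxl hint2 hintM
      intro s hs
      have hs0 : 0 < s := lt_of_lt_of_le hx0 hs.1
      exact div_le_div_of_nonneg_right (hbound s (hx.trans hs.1)).2 hs0.le
    constructor
    · rw [hratio, Real.rpow_def_of_pos hl0, Real.exp_le_exp, mul_comm (Real.log l) m]
      exact hlow
    · rw [hratio, Real.rpow_def_of_pos hl0, Real.exp_le_exp, mul_comm (Real.log l) M]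
      exact hhigh
  have hev_lo : ∀ᶠ x in atTop, l ^ m ≤ a (l*x) / a x :=
    eventually_atTop.2 ⟨t₀, fun x hx => (key x hx).1⟩
  have hev_hi : ∀ᶠ x in atTop, a (l*x) / a x ≤ l ^ M :=
    eventually_atTop.2 ⟨t₀, fun x hx => (key x hx).2⟩
  have hb_le : IsBoundedUnder (· ≤ ·) atTop (fun x => a (l*x) / a x) :=
    isBoundedUnder_of_eventually_le hev_hi
  have hb_ge : IsBoundedUnder (· ≥ ·) atTop (fun x => a (l*x) / a x) :=
    isBoundedUnder_of_eventually_ge hev_lo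
  refine ⟨le_liminf_of_le hb_le.isCoboundedUnder_ge hev_lo,
    liminf_le_limsup hb_le hb_ge,
    limsup_le_of_le hb_ge.isCoboundedUnder_le hev_hi⟩
end

section
/- Let t₀ ∈ ℝ and let g, f, h : [t₀,∞) → ℝ be continuous functions with g(t) < h(t) and g(t) ≤ f(t) ≤ h(t) for all t ≥ t₀. Define u(t) = (1/2)·arccos((h(t) + g(t) − 2f(t))/(h(t) − g(t))). Then u is continuous on [t₀,∞) and f(t) = g(t)·cos(u(t))² + h(t)·sin(u(t))² for all t ≥ t₀. -/
open Real Set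

/-- Explicit-formula part of Proposition 4: for continuous bounding functions with
`g < h`, the interpolating angle `u = (1/2)·arccos((h + g − 2f)/(h − g))` is continuous
and satisfies `f = g·cos(u)² + h·sin(u)²`. -/
theorem stmt_10 (t₀ : ℝ) (g f h : ℝ → ℝ)
    (hg : ContinuousOn g (Set.Ici t₀)) (hf : ContinuousOn f (Set.Ici t₀))
    (hh : ContinuousOn h (Set.Ici t₀))
    (hlt : ∀ t, t₀ ≤ t → g t < h t)
    (hsand : ∀ t, t₀ ≤ t → g t ≤ f t ∧ f t ≤ h t)
    (u : ℝ → ℝ)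
    (hu : ∀ t, u t = (1 / 2) * Real.arccos ((h t + g t - 2 * f t) / (h t - g t))) :
    ContinuousOn u (Set.Ici t₀) ∧
    ∀ t, t₀ ≤ t →
      f t = g t * Real.cos (u t) ^ 2 + h t * Real.sin (u t) ^ 2 := by
  constructor
  · have : ContinuousOn (fun t => (1 / 2) * Real.arccos ((h t + g t - 2 * f t) / (h t - g t)))
        (Set.Ici t₀) := by
      apply ContinuousOn.mul continuousOn_const
      apply Real.continuous_arccos.comp_continuousOn
      apply ContinuousOn.div
      · exact ((hh.add hg).sub (continuousOn_const.mul hf))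
      · exact hh.sub hg
      · intro t ht
        exact sub_ne_zero.mpr (hlt t ht).ne'
    exact this.congr (fun t _ => hu t)
  · intro t ht
    have hne : h t - g t ≠ 0 := sub_ne_zero.mpr (hlt t ht).ne'
    have hpos : 0 < h t - g t := sub_pos.mpr (hlt t ht)
    obtain ⟨h1, h2⟩ := hsand t ht
    set x := (h t + g t - 2 * f t) / (h t - g t) with hx
    have hx1 : -1 ≤ x := by
      rw [hx, le_div_iff₀ hpos]; linarith
    have hx2 : x ≤ 1 := by
      rw [hx, div_le_one hpos]; linarith
    have hcos : Real.cos (2 * u t) = x := by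
      have h2u : 2 * u t = Real.arccos x := by rw [hu t]; ring
      rw [h2u]; exact Real.cos_arccos hx1 hx2
    have key : Real.cos (2 * u t) = Real.cos (u t) ^ 2 - Real.sin (u t) ^ 2 := by
      rw [Real.cos_two_mul]
      have := Real.sin_sq_add_cos_sq (u t)
      linarith
    have hs : Real.sin (u t) ^ 2 + Real.cos (u t) ^ 2 = 1 := Real.sin_sq_add_cos_sq (u t)
    have : Real.cos (u t) ^ 2 - Real.sin (u t) ^ 2 = x := by rw [← key, hcos]
    have hxeq : x * (h t - g t) = h t + g t - 2 * f t := div_mul_cancel₀ _ hne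
    linear_combination ((h t - g t)/2) * this - ((g t + h t)/2) * hs + (1/2) * hxeq
end

section
/- Let F(Ω) = 1/(1 − Ω) − (Ω/(2(1 − Ω)^{3/2}))·arcosh((2 − Ω)/Ω) for 0 < Ω < 1, where arcosh(x) = ln(x + √(x² − 1)). Then lim_{Ω→1⁻} F(Ω) = 2/3. -/
/-!
With `u = √(1 - Ω)` one has `(2 - Ω)/Ω = (1 + u²)/(1 - u²)`, whose `arcosh` is
`log ((1 + u)/(1 - u)) = 2u + 2u³/3 + O(u⁴)`. Substituting, the `1/u²` singularities cancel and
`F = 2/3 + O(u)`, with the error bounded explicitly by the Taylor remainder of `log (1 - x)`.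
-/

open Real Filter Set Topology

theorem abs_log_div_sub_le {x : ℝ} (hx : |x| < 1) :
    |log ((1 + x) / (1 - x)) - 2 * (x + x ^ 3 / 3)| ≤ 2 * |x| ^ 4 / (1 - |x|) := by
  have hminus := abs_log_sub_add_sum_range_le hx 3
  have hplus := abs_log_sub_add_sum_range_le (x := -x) (by rwa [abs_neg]) 3
  norm_num [Finset.sum_range_succ] at hminus hplus
  rw [log_div (by linarith [neg_abs_le x]) (by linarith [le_abs_self x])]
  calc _ = |(-x + x ^ 2 / 2 + (-x) ^ 3 / 3 + log (1 + x))
          - (x + x ^ 2 / 2 + x ^ 3 / 3 + log (1 - x))| := by ring_nf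
    _ ≤ _ := by
      refine (abs_sub _ _).trans ?_
      rw [mul_div_assoc, two_mul]
      exact add_le_add hplus hminus

theorem one_add_sq_div_one_sub_sq_add_sqrt_eq {u : ℝ} (hu0 : 0 ≤ u) (hu1 : u < 1) :
    (1 + u ^ 2) / (1 - u ^ 2) + √(((1 + u ^ 2) / (1 - u ^ 2)) ^ 2 - 1) = (1 + u) / (1 - u) := by
  have h1 : 0 < 1 - u := by linarith
  have h2 : 0 < 1 - u ^ 2 := by nlinarith
  have hsq : ((1 + u ^ 2) / (1 - u ^ 2)) ^ 2 - 1 = (2 * u / (1 - u ^ 2)) ^ 2 := by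
    field_simp; ring
  rw [hsq, sqrt_sq (by positivity)]
  field_simp
  ring

/-- The function `F` in the variable `u = √(1 - Ω)`. -/
noncomputable def cptOpen (u : ℝ) : ℝ :=
  1 / u ^ 2 - (1 - u ^ 2) / (2 * u ^ 3) * log ((1 + u) / (1 - u))

theorem abs_cptOpen_sub_le {u : ℝ} (hu0 : 0 < u) (hu1 : u < 1) :
    |cptOpen u - 2 / 3| ≤ u ^ 2 / 3 + u * (1 + u) := by
  set E := log ((1 + u) / (1 - u)) - 2 * (u + u ^ 3 / 3) with hE
  have hEbound : |E| ≤ 2 * u ^ 4 / (1 - u) := by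
    simpa [abs_of_pos hu0] using abs_log_div_sub_le (x := u) (by rwa [abs_of_pos hu0])
  have hc : 0 ≤ (1 - u ^ 2) / (2 * u ^ 3) := div_nonneg (by nlinarith) (by positivity)
  calc |cptOpen u - 2 / 3| = |u ^ 2 / 3 - (1 - u ^ 2) / (2 * u ^ 3) * E| := by
        rw [cptOpen, hE]; congr 1; field_simp; ring
    _ ≤ u ^ 2 / 3 + (1 - u ^ 2) / (2 * u ^ 3) * (2 * u ^ 4 / (1 - u)) := by
        refine (abs_sub _ _).trans (add_le_add (abs_of_nonneg (by positivity)).le ?_)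
        rw [abs_mul, abs_of_nonneg hc]
        exact mul_le_mul_of_nonneg_left hEbound hc
    _ = u ^ 2 / 3 + u * (1 + u) := by
        have : 1 - u ≠ 0 := by linarith
        field_simp; ring

theorem tendsto_cptOpen_nhdsGT_zero : Tendsto cptOpen (𝓝[>] 0) (𝓝 (2 / 3)) := by
  have hbound : Tendsto (fun u : ℝ => u ^ 2 / 3 + u * (1 + u)) (𝓝[>] 0) (𝓝 0) := by
    have : Continuous (fun u : ℝ => u ^ 2 / 3 + u * (1 + u)) := by fun_prop
    simpa using (this.tendsto 0).mono_left nhdsWithin_le_nhds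
  rw [tendsto_iff_norm_sub_tendsto_zero]
  refine squeeze_zero' (Eventually.of_forall fun _ => norm_nonneg _) ?_ hbound
  filter_upwards [Ioo_mem_nhdsGT one_pos] with u hu
  exact abs_cptOpen_sub_le hu.1 hu.2

theorem tendsto_sqrt_one_sub_nhdsGT_zero :
    Tendsto (fun Ω : ℝ => √(1 - Ω)) (𝓝[<] 1) (𝓝[>] 0) := by
  refine tendsto_nhdsWithin_iff.mpr ⟨?_, ?_⟩
  · have : Continuous (fun Ω : ℝ => √(1 - Ω)) := by fun_prop
    simpa using (this.tendsto 1).mono_left nhdsWithin_le_nhds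
  · filter_upwards [self_mem_nhdsWithin] with Ω (hΩ : Ω < 1)
    exact sqrt_pos.mpr (sub_pos.mpr hΩ)

theorem cpt_formula_eq_cptOpen_sqrt {Ω : ℝ} (hΩ0 : 0 < Ω) (hΩ1 : Ω < 1) :
    1 / (1 - Ω) - (Ω / (2 * (1 - Ω) ^ ((3 : ℝ) / 2))) *
      log ((2 - Ω) / Ω + √(((2 - Ω) / Ω) ^ 2 - 1)) = cptOpen √(1 - Ω) := by
  set u := √(1 - Ω)
  have hu0 : 0 ≤ u := sqrt_nonneg _
  have hu2 : 1 - Ω = u ^ 2 := (sq_sqrt (by linarith)).symm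
  have hΩ : Ω = 1 - u ^ 2 := by linarith
  have hu1 : u < 1 := by nlinarith
  have hpow : (1 - Ω) ^ ((3 : ℝ) / 2) = u ^ 3 := by
    rw [hu2, ← rpow_natCast u 2, ← rpow_mul hu0]; norm_num
  have hx : (2 - Ω) / Ω = (1 + u ^ 2) / (1 - u ^ 2) := by rw [hΩ]; ring_nf
  rw [hx, one_add_sq_div_one_sub_sq_add_sqrt_eq hu0 hu1, hpow, cptOpen, hΩ]
  ring_nf

/-- For the Carroll–Press–Turner function of the open (`k = −1`) matter dominated
universe, `F(Ω) = 1/(1−Ω) − (Ω/(2(1−Ω)^{3/2}))·arcosh((2−Ω)/Ω)` with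
`arcosh(x) = ln(x + √(x²−1))`, one has `F(Ω) → 2/3` as `Ω → 1⁻`. -/
theorem stmt_14 (arcosh F : ℝ → ℝ)
    (harcosh : ∀ x, arcosh x = Real.log (x + Real.sqrt (x ^ 2 - 1)))
    (hF : ∀ Ω ∈ Set.Ioo (0 : ℝ) 1,
      F Ω = 1 / (1 - Ω)
        - (Ω / (2 * (1 - Ω) ^ ((3 : ℝ) / 2))) * arcosh ((2 - Ω) / Ω)) :
    Tendsto F (nhdsWithin 1 (Set.Ioo (0 : ℝ) 1)) (nhds (2 / 3)) := by
  have hF_eq : ∀ Ω ∈ Ioo (0 : ℝ) 1, cptOpen √(1 - Ω) = F Ω := fun Ω hΩ => by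
    rw [hF Ω hΩ, harcosh, cpt_formula_eq_cptOpen_sqrt hΩ.1 hΩ.2]
  have hsqrt : Tendsto (fun Ω : ℝ => √(1 - Ω)) (𝓝[Ioo 0 1] 1) (𝓝[>] 0) :=
    tendsto_sqrt_one_sub_nhdsGT_zero.mono_left (nhdsWithin_mono _ Ioo_subset_Iio_self)
  exact (tendsto_cptOpen_nhdsGT_zero.comp hsqrt).congr' (eventually_nhdsWithin_of_forall hF_eq)
end
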